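/- Let S ⊂ ℝ² be a bounded domain with Lipschitz boundary, let Γ be a nonempty relatively open subset of ∂S, and set Ω := S × (−1/2, 1/2). Let F ∈ L¹(Ω; ℝ³) satisfy ∫_Ω F · ∂₃φ dx = 0 for every φ ∈ C¹_b(ℝ³; ℝ³) with φ(x′, x₃) = 0 for all (x′, x₃) ∈ Γ × (−1/2, 1/2). Then F = 0 almost everywhere in Ω. -/

import Mathlib

/-!
Given a smooth `g` compactly supported in `Ω`, integrate it vertically:
`φ(x) = ∫_{-1}^{0} g(x + s e₃) ds · eᵢ`. Then `∂₃φ(x) = (g(x) - g(x - e₃)) eᵢ`, and on `Ω` the point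
`x - e₃` lies below the plate, so `∂₃φ = g eᵢ` there. Since `Γ` misses the open set `S`, the
vertical line through a point of `Γ × (-1/2, 1/2)` misses `supp g`, so `φ` is an admissible test
map. Hence `∫_Ω g Fᵢ = 0` for all such `g`, and `Fᵢ = 0` a.e. in `Ω` by the fundamental lemma of
the calculus of variations.
-/

open Matrix MeasureTheory Filter Topology
open scoped ENNReal

noncomputable section

/-- `S ⊆ ℝ²` has Lipschitz boundary: near each boundary point, up to a rotation of
coordinates, `S` coincides with the region above the graph of a Lipschitz function. -/
def HasLipschitzBoundary (S : Set (Fin 2 → ℝ)) : Prop :=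
  ∀ p ∈ frontier S, ∃ r > (0:ℝ), ∃ R : Matrix (Fin 2) (Fin 2) ℝ, Rᵀ * R = 1 ∧
    ∃ L : NNReal, ∃ f : ℝ → ℝ, LipschitzWith L f ∧
      ∀ x ∈ Metric.ball p r, (x ∈ S ↔ f (R.mulVec (x - p) 0) < R.mulVec (x - p) 1)

/-- The plate `Ω = S × (-1/2, 1/2) ⊆ ℝ³`. -/
def plateDomain (S : Set (Fin 2 → ℝ)) : Set (Fin 3 → ℝ) :=
  {x | ![x 0, x 1] ∈ S ∧ x 2 ∈ Set.Ioo (-(1/2) : ℝ) (1/2)}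

section IntegralAlong

variable {E G : Type*} [NormedAddCommGroup E] [NormedSpace ℝ E]
  [NormedAddCommGroup G] [NormedSpace ℝ G]

def integralAlong (g : E → G) (v : E) (a b : ℝ) (x : E) : G :=
  ∫ s in a..b, g (x + s • v)

variable {g : E → G} (v : E) (a b : ℝ)

theorem hasFDerivAt_integralAlong (hg : ContDiff ℝ 1 g) (hgs : HasCompactSupport g) (x : E) :
    HasFDerivAt (integralAlong g v a b) (∫ s in a..b, fderiv ℝ g (x + s • v)) x := by
  have hg' : Continuous (fderiv ℝ g) := hg.continuous_fderiv one_ne_zero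
  obtain ⟨C, hC⟩ := (hgs.fderiv ℝ).exists_bound_of_continuous hg'
  refine intervalIntegral.hasFDerivAt_integral_of_dominated_of_fderiv_le (bound := fun _ => C)
    (F' := fun y s => fderiv ℝ g (y + s • v))
    Filter.univ_mem (Eventually.of_forall fun y => ?_) ?_ ?_
    (ae_of_all _ fun s _ y _ => hC _) intervalIntegrable_const
    (ae_of_all _ fun s _ y _ => ?_)
  · exact (hg.continuous.comp (by fun_prop)).aestronglyMeasurable
  · exact (hg.continuous.comp (by fun_prop)).intervalIntegrable _ _
  · exact (hg'.comp (by fun_prop)).aestronglyMeasurable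
  · exact (hasFDerivAt_comp_add_right _).2 (hg.differentiable one_ne_zero _).hasFDerivAt

theorem fderiv_integralAlong (hg : ContDiff ℝ 1 g) (hgs : HasCompactSupport g) :
    fderiv ℝ (integralAlong g v a b) = fun x => ∫ s in a..b, fderiv ℝ g (x + s • v) :=
  funext fun x => (hasFDerivAt_integralAlong v a b hg hgs x).fderiv

theorem contDiff_integralAlong (hg : ContDiff ℝ 1 g) (hgs : HasCompactSupport g) :
    ContDiff ℝ 1 (integralAlong g v a b) := by
  refine contDiff_one_iff_fderiv.2
    ⟨fun x => (hasFDerivAt_integralAlong v a b hg hgs x).differentiableAt, ?_⟩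
  have hg' : Continuous (fderiv ℝ g) := hg.continuous_fderiv one_ne_zero
  rw [fderiv_integralAlong v a b hg hgs]
  exact intervalIntegral.continuous_parametric_intervalIntegral_of_continuous' (by fun_prop) a b

theorem fderiv_integralAlong_apply_self [CompleteSpace G] (hg : ContDiff ℝ 1 g)
    (hgs : HasCompactSupport g) (x : E) :
    fderiv ℝ (integralAlong g v a b) x v = g (x + b • v) - g (x + a • v) := by
  have hg' : Continuous fun s : ℝ => fderiv ℝ g (x + s • v) :=
    (hg.continuous_fderiv one_ne_zero).comp (by fun_prop)
  rw [fderiv_integralAlong v a b hg hgs, ContinuousLinearMap.intervalIntegral_apply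
    (hg'.intervalIntegrable a b)]
  refine intervalIntegral.integral_eq_sub_of_hasDerivAt (f := fun s => g (x + s • v))
    (fun s _ => ?_) ((hg'.clm_apply continuous_const).intervalIntegrable a b)
  have hline : HasDerivAt (fun s : ℝ => x + s • v) v s := by
    simpa using ((hasDerivAt_id s).smul_const v).const_add x
  exact (hg.differentiable one_ne_zero _).hasFDerivAt.comp_hasDerivAt s hline

theorem exists_bound_integralAlong (hg : ContDiff ℝ 1 g) (hgs : HasCompactSupport g) :
    ∃ K, ∀ x, ‖integralAlong g v a b x‖ ≤ K ∧ ‖fderiv ℝ (integralAlong g v a b) x‖ ≤ K := by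
  obtain ⟨C₀, hC₀⟩ := hgs.exists_bound_of_continuous hg.continuous
  obtain ⟨C₁, hC₁⟩ := (hgs.fderiv ℝ).exists_bound_of_continuous
    (hg.continuous_fderiv one_ne_zero)
  refine ⟨max C₀ C₁ * |b - a|, fun x => ⟨?_, ?_⟩⟩
  · exact intervalIntegral.norm_integral_le_of_norm_le_const fun s _ =>
      (hC₀ _).trans (le_max_left _ _)
  · rw [fderiv_integralAlong v a b hg hgs]
    exact intervalIntegral.norm_integral_le_of_norm_le_const fun s _ =>
      (hC₁ _).trans (le_max_right _ _)

end IntegralAlong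

theorem isOpen_plateDomain {S : Set (Fin 2 → ℝ)} (hS : IsOpen S) : IsOpen (plateDomain S) := by
  refine (hS.preimage ?_).inter (isOpen_Ioo.preimage (continuous_apply 2))
  exact continuous_pi fun j => by fin_cases j <;> exact continuous_apply _

theorem add_smul_single_two_mem_plateDomain_iff {S : Set (Fin 2 → ℝ)} {x : Fin 3 → ℝ} {s : ℝ} :
    x + s • Pi.single 2 1 ∈ plateDomain S ↔
      ![x 0, x 1] ∈ S ∧ x 2 + s ∈ Set.Ioo (-(1/2) : ℝ) (1/2) := by
  simp [plateDomain]

theorem exists_vertical_antiderivative {G : Type*} [NormedAddCommGroup G] [NormedSpace ℝ G]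
    [CompleteSpace G] {S : Set (Fin 2 → ℝ)} {g : (Fin 3 → ℝ) → ℝ} (hg : ContDiff ℝ 1 g)
    (hgs : HasCompactSupport g) (hgS : tsupport g ⊆ plateDomain S) (w : G) :
    ∃ φ : (Fin 3 → ℝ) → G, ContDiff ℝ 1 φ ∧
      (∃ K : ℝ, ∀ x, ‖φ x‖ ≤ K ∧ ‖fderiv ℝ φ x‖ ≤ K) ∧
      (∀ y, ![y 0, y 1] ∉ S → φ y = 0) ∧
      ∀ x ∈ plateDomain S, fderiv ℝ φ x (Pi.single 2 1) = g x • w := by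
  have hgw : ContDiff ℝ 1 fun x => g x • w := hg.smul contDiff_const
  have hgws : HasCompactSupport fun x => g x • w := hgs.smul_right
  have hg_eq_zero : ∀ y, y ∉ plateDomain S → g y = 0 := fun y hy =>
    image_eq_zero_of_notMem_tsupport fun h => hy (hgS h)
  refine ⟨integralAlong (fun x => g x • w) (Pi.single 2 1) (-1) 0,
    contDiff_integralAlong _ _ _ hgw hgws, exists_bound_integralAlong _ _ _ hgw hgws,
    fun y hy => ?_, fun x hx => ?_⟩
  · have hline : ∀ s : ℝ, g (y + s • Pi.single 2 1) = 0 := fun s =>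
      hg_eq_zero _ fun h => hy (add_smul_single_two_mem_plateDomain_iff.1 h).1
    simp [integralAlong, hline]
  · rw [fderiv_integralAlong_apply_self _ _ _ hgw hgws, zero_smul, add_zero,
      hg_eq_zero (x + (-1 : ℝ) • Pi.single 2 1), zero_smul, sub_zero]
    intro h
    have hbelow := (add_smul_single_two_mem_plateDomain_iff.1 h).2.1
    linarith [hx.2.2]

theorem statement7_general (S : Set (Fin 2 → ℝ)) (hSopen : IsOpen S)
    (Γ : Set (Fin 2 → ℝ)) (hΓsub : Γ ⊆ frontier S)
    (F : (Fin 3 → ℝ) → (Fin 3 → ℝ))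
    (hFint : Integrable F (volume.restrict (plateDomain S)))
    (hF : ∀ φ : (Fin 3 → ℝ) → (Fin 3 → ℝ), ContDiff ℝ 1 φ →
      (∃ K : ℝ, ∀ x, ‖φ x‖ ≤ K ∧ ‖fderiv ℝ φ x‖ ≤ K) →
      (∀ p ∈ Γ, ∀ x₃ ∈ Set.Ioo (-(1/2) : ℝ) (1/2), φ ![p 0, p 1, x₃] = 0) →
      ∫ x in plateDomain S, F x ⬝ᵥ fderiv ℝ φ x (Pi.single 2 1) = 0) :
    ∀ᵐ x ∂volume.restrict (plateDomain S), F x = 0 := by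
  have hΩ : IsOpen (plateDomain S) := isOpen_plateDomain hSopen
  have hΓS : ∀ p ∈ Γ, p ∉ S := fun p hp => (hSopen.frontier_eq ▸ hΓsub hp).2
  have hcomp : ∀ i, ∀ᵐ x ∂volume.restrict (plateDomain S), F x i = 0 := by
    intro i
    have hloc := (hFint.eval i).locallyIntegrable.locallyIntegrableOn (plateDomain S)
    have hvanish := hΩ.ae_eq_zero_of_integral_contDiff_smul_eq_zero hloc fun g hg hgs hgS => by
      obtain ⟨φ, hφ, hφK, hφS, hφ₃⟩ := exists_vertical_antiderivative (hg.of_le (by simp)) hgs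
        hgS (Pi.single i 1 : Fin 3 → ℝ)
      have hφΓ : ∀ p ∈ Γ, ∀ x₃ ∈ Set.Ioo (-(1/2) : ℝ) (1/2), φ ![p 0, p 1, x₃] = 0 :=
        fun p hp x₃ _ => hφS _ <| by
          convert hΓS p hp using 2
          ext j; fin_cases j <;> rfl
      rw [← hF φ hφ hφK hφΓ]
      refine setIntegral_congr_fun hΩ.measurableSet fun x hx => ?_
      simp [hφ₃ x hx, mul_comm]
    filter_upwards [hvanish, ae_restrict_mem hΩ.measurableSet] with x h1 h2 using h1 h2
  filter_upwards [ae_all_iff.2 hcomp] with x hx using funext hx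

/-- if `F ∈ L¹(Ω; ℝ³)` satisfies `∫_Ω F · ∂₃φ dx = 0` for every bounded `C¹`
test map `φ` vanishing on `Γ × (-1/2, 1/2)`, then `F = 0` a.e. in `Ω`. -/
theorem statement7 (S : Set (Fin 2 → ℝ)) (hSopen : IsOpen S) (hSconn : IsConnected S)
    (hSbdd : Bornology.IsBounded S) (hSlip : HasLipschitzBoundary S)
    (Γ : Set (Fin 2 → ℝ)) (hΓsub : Γ ⊆ frontier S) (hΓne : Γ.Nonempty)
    (hΓopen : ∃ V : Set (Fin 2 → ℝ), IsOpen V ∧ Γ = V ∩ frontier S)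
    (F : (Fin 3 → ℝ) → (Fin 3 → ℝ))
    (hFint : Integrable F (volume.restrict (plateDomain S)))
    (hF : ∀ φ : (Fin 3 → ℝ) → (Fin 3 → ℝ), ContDiff ℝ 1 φ →
      (∃ K : ℝ, ∀ x, ‖φ x‖ ≤ K ∧ ‖fderiv ℝ φ x‖ ≤ K) →
      (∀ p ∈ Γ, ∀ x₃ ∈ Set.Ioo (-(1/2) : ℝ) (1/2), φ ![p 0, p 1, x₃] = 0) →
      ∫ x in plateDomain S, F x ⬝ᵥ fderiv ℝ φ x (Pi.single 2 1) = 0) :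
    ∀ᵐ x ∂volume.restrict (plateDomain S), F x = 0 :=
  statement7_general S hSopen Γ hΓsub F hFint hF
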